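/- arXiv:0705.3676 — 4 statements merged into one kernel-verified Lean document; each statement's English description precedes it below -/
import Mathlib

section
/- If ψ(λ, μ) is related to a solution φ of φ_λ − φ_μ − 2(λ−μ)φ_{λμ} = 0 via ψ_λ = (λ−μ)φ_λ and ψ_μ = −(λ−μ)φ_μ, then ψ satisfies the 'dual' PDE ψ_λ − ψ_μ + 2(λ−μ)ψ_{λμ} = 0. -/
noncomputable def pd1 (f : ℝ → ℝ → ℝ) (l m : ℝ) : ℝ := deriv (fun x => f x m) l
noncomputable def pd2 (f : ℝ → ℝ → ℝ) (l m : ℝ) : ℝ := deriv (fun y => f l y) m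
noncomputable def pd12 (f : ℝ → ℝ → ℝ) (l m : ℝ) : ℝ := deriv (fun y => pd1 f l y) m

lemma pd1_eq_fderiv (f : ℝ → ℝ → ℝ) (hf : ContDiff ℝ (⊤ : ℕ∞) (fun p : ℝ × ℝ => f p.1 p.2))
    (l m : ℝ) : pd1 f l m = fderiv ℝ (fun p : ℝ × ℝ => f p.1 p.2) (l, m) (1, 0) := by
  have h1 : HasDerivAt (fun x : ℝ => (x, m)) ((1 : ℝ), (0 : ℝ)) l :=
    HasDerivAt.prodMk (hasDerivAt_id l) (hasDerivAt_const l m)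
  have h2 := ((hf.differentiable (by simp) (l, m)).hasFDerivAt).comp_hasDerivAt l h1
  exact h2.deriv

lemma pd1_diff (f : ℝ → ℝ → ℝ) (hf : ContDiff ℝ (⊤ : ℕ∞) (fun p : ℝ × ℝ => f p.1 p.2))
    (l m : ℝ) : DifferentiableAt ℝ (fun y => pd1 f l y) m := by
  have hfd : ContDiff ℝ (⊤ : ℕ∞) (fderiv ℝ (fun p : ℝ × ℝ => f p.1 p.2)) :=
    hf.fderiv_right (by simp)
  have h : ContDiff ℝ (⊤ : ℕ∞) (fun y : ℝ =>
      fderiv ℝ (fun p : ℝ × ℝ => f p.1 p.2) (l, y) ((1 : ℝ), (0 : ℝ))) :=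
    (hfd.clm_apply contDiff_const).comp ((contDiff_const.prodMk contDiff_id))
  have : (fun y => pd1 f l y) = fun y : ℝ =>
      fderiv ℝ (fun p : ℝ × ℝ => f p.1 p.2) (l, y) ((1 : ℝ), (0 : ℝ)) := by
    funext y; exact pd1_eq_fderiv f hf l y
  rw [this]
  exact (h.differentiable (by simp)).differentiableAt

/-- If `ψ` is the stream-function partner of a solution `φ` of
`φ_λ - φ_μ - 2(λ-μ)φ_{λμ} = 0` (i.e. `ψ_λ = (λ-μ)φ_λ`, `ψ_μ = -(λ-μ)φ_μ`),
then `ψ` satisfies the dual PDE `ψ_λ - ψ_μ + 2(λ-μ)ψ_{λμ} = 0`. -/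
theorem stream_function_dual_pde
    (U : Set (ℝ × ℝ)) (hU : IsOpen U) (hsc : SimplyConnectedSpace U)
    (hne : ∀ p ∈ U, p.1 ≠ p.2)
    (φ ψ : ℝ → ℝ → ℝ)
    (hφ : ContDiff ℝ (⊤ : ℕ∞) (fun p : ℝ × ℝ => φ p.1 p.2))
    (hψ : ContDiff ℝ (⊤ : ℕ∞) (fun p : ℝ × ℝ => ψ p.1 p.2))
    (hpde : ∀ p ∈ U,
      pd1 φ p.1 p.2 - pd2 φ p.1 p.2 - 2 * (p.1 - p.2) * pd12 φ p.1 p.2 = 0)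
    (hrel1 : ∀ p ∈ U, pd1 ψ p.1 p.2 = (p.1 - p.2) * pd1 φ p.1 p.2)
    (hrel2 : ∀ p ∈ U, pd2 ψ p.1 p.2 = -((p.1 - p.2) * pd2 φ p.1 p.2)) :
    ∀ p ∈ U,
      pd1 ψ p.1 p.2 - pd2 ψ p.1 p.2 + 2 * (p.1 - p.2) * pd12 ψ p.1 p.2 = 0 := by
  rintro ⟨l, m⟩ hp
  -- compute pd12 ψ l m
  have hopen : IsOpen {y : ℝ | (l, y) ∈ U} := hU.preimage (by fun_prop)
  have hmem : m ∈ {y : ℝ | (l, y) ∈ U} := hp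
  have heq : (fun y => pd1 ψ l y) =ᶠ[nhds m] fun y => (l - y) * pd1 φ l y := by
    filter_upwards [hopen.mem_nhds hmem] with y hy
    exact hrel1 (l, y) hy
  have hdφ : HasDerivAt (fun y => pd1 φ l y) (pd12 φ l m) m :=
    (pd1_diff φ hφ l m).hasDerivAt
  have hprod : HasDerivAt (fun y => (l - y) * pd1 φ l y)
      ((0 - 1) * pd1 φ l m + (l - m) * pd12 φ l m) m :=
    ((hasDerivAt_const m l).sub (hasDerivAt_id m)).mul hdφ
  have h12 : pd12 ψ l m = (0 - 1) * pd1 φ l m + (l - m) * pd12 φ l m := by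
    have := heq.deriv_eq
    rw [pd12, this, hprod.deriv]
  have h1 := hrel1 (l, m) hp
  have h2 := hrel2 (l, m) hp
  have h3 := hpde (l, m) hp
  simp only at h1 h2 h3 ⊢
  rw [h1, h2, h12]
  linear_combination (-(l - m)) * h3
end

section
/- The Gaussian curvature of the two-dimensional Riemannian metric ds² = μ [dλ²/(a₀+a₁λ−c₀λ²) ] + dμ²/(4μ(c₃μ³+c₂μ²+c₁μ+c₀)) equals κ = −(3c₃μ² + 2c₂μ + c₁); in particular, κ is constant if and only if c₃ = c₂ = 0, and κ = 0 if and only if c₃ = c₂ = c₁ = 0. -/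
/-- Gaussian curvature of the orthogonal metric `E dλ² + G dμ²`
(Brioschi formula with `F = 0`):
`κ = -1/(2√(EG)) [ ∂_λ (G_λ/√(EG)) + ∂_μ (E_μ/√(EG)) ]`. -/
noncomputable def gaussCurv (E G : ℝ → ℝ → ℝ) (l m : ℝ) : ℝ :=
  -(1 / (2 * Real.sqrt (E l m * G l m))) *
    (deriv (fun a => pd1 G a m / Real.sqrt (E a m * G a m)) l +
     deriv (fun b => pd2 E l b / Real.sqrt (E l b * G l b)) m)

open Real

theorem gaussCurv_of_G_indep_fst (E : ℝ → ℝ → ℝ) (g : ℝ → ℝ) (l m : ℝ) :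
    gaussCurv E (fun _ m => g m) l m =
      -(1 / (2 * √(E l m * g m))) * deriv (fun b => pd2 E l b / √(E l b * g b)) m := by
  simp [gaussCurv, pd1]

theorem sqrt_div_mul_one_div_four_mul {m Q P : ℝ} (hm : m ≠ 0) :
    √(m / Q * (1 / (4 * m * P))) = 1 / (2 * √(Q * P)) := by
  have hsq : m / Q * (1 / (4 * m * P)) = (Q * P)⁻¹ / 2 ^ 2 := by
    field_simp
    ring
  rw [hsq, sqrt_div' _ (by positivity), sqrt_inv, sqrt_sq zero_le_two]
  ring

theorem pd2_div_fst (q : ℝ → ℝ) (l m : ℝ) : pd2 (fun l m => m / q l) l m = 1 / q l := by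
  simp only [pd2, deriv_div_const, deriv_id'']

theorem hasDerivAt_pd2_div_sqrt {q P : ℝ → ℝ} {P' l m : ℝ} (hm : m ≠ 0)
    (hqP : 0 < q l * P m) (hP : HasDerivAt P P' m) :
    HasDerivAt
      (fun b => pd2 (fun l m => m / q l) l b / √(b / q l * (1 / (4 * b * P b))))
      (P' / √(q l * P m)) m := by
  have hq : q l ≠ 0 := left_ne_zero_of_mul hqP.ne'
  have hsqrt : HasDerivAt (fun b => 2 / q l * √(q l * P b))
      (2 / q l * (q l * P' / (2 * √(q l * P m)))) m :=
    ((hP.const_mul (q l)).sqrt hqP.ne').const_mul _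
  have hev : (fun b => pd2 (fun l m => m / q l) l b / √(b / q l * (1 / (4 * b * P b))))
      =ᶠ[nhds m] fun b => 2 / q l * √(q l * P b) := by
    filter_upwards [eventually_ne_nhds hm] with b hb
    rw [pd2_div_fst, sqrt_div_mul_one_div_four_mul hb, div_div_eq_mul_div]
    ring
  refine (hsqrt.congr_of_eventuallyEq hev).congr_deriv ?_
  field_simp

theorem gaussCurv_eq_neg_deriv {q P : ℝ → ℝ} {P' l m : ℝ} (hm : m ≠ 0)
    (hqP : 0 < q l * P m) (hP : HasDerivAt P P' m) :
    gaussCurv (fun l m => m / q l) (fun _ m => 1 / (4 * m * P m)) l m = -P' := by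
  rw [gaussCurv_of_G_indep_fst, (hasDerivAt_pd2_div_sqrt hm hqP hP).deriv,
    sqrt_div_mul_one_div_four_mul hm]
  have : 0 < √(q l * P m) := sqrt_pos.mpr hqP
  field_simp

theorem hasDerivAt_cubic (c₀ c₁ c₂ c₃ x : ℝ) :
    HasDerivAt (fun x => c₃ * x ^ 3 + c₂ * x ^ 2 + c₁ * x + c₀)
      (3 * c₃ * x ^ 2 + 2 * c₂ * x + c₁) x := by
  refine ((((hasDerivAt_pow 3 x).const_mul c₃).add ((hasDerivAt_pow 2 x).const_mul c₂)).add
    ((hasDerivAt_id x).const_mul c₁)).add_const c₀ |>.congr_deriv ?_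
  simp only [Nat.cast_ofNat]
  ring

theorem forall_quadratic_eq_zero_iff (a b c : ℝ) :
    (∀ x : ℝ, a * x ^ 2 + b * x + c = 0) ↔ a = 0 ∧ b = 0 ∧ c = 0 := by
  refine ⟨fun h => ?_, fun ⟨ha, hb, hc⟩ x => by simp [ha, hb, hc]⟩
  have h₀ := h 0
  have h₁ := h 1
  have h₂ := h (-1)
  refine ⟨?_, ?_, ?_⟩ <;> linarith

theorem exists_forall_quadratic_eq_iff (a b c : ℝ) :
    (∃ k, ∀ x : ℝ, a * x ^ 2 + b * x + c = k) ↔ a = 0 ∧ b = 0 := by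
  constructor
  · rintro ⟨k, hk⟩
    obtain ⟨ha, hb, -⟩ := (forall_quadratic_eq_zero_iff a b (c - k)).1 fun x => by linarith [hk x]
    exact ⟨ha, hb⟩
  · rintro ⟨ha, hb⟩
    exact ⟨c, fun x => by simp [ha, hb]⟩

theorem gauss_curvature_of_second_type_metric_general
    (a₀ a₁ c₀ c₁ c₂ c₃ : ℝ) (U : Set (ℝ × ℝ))
    (hpos : ∀ p ∈ U, 0 < p.2 ∧ 0 < a₀ + a₁ * p.1 - c₀ * p.1 ^ 2 ∧
      0 < c₃ * p.2 ^ 3 + c₂ * p.2 ^ 2 + c₁ * p.2 + c₀) :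
    (∀ p ∈ U, gaussCurv
        (fun l m => m / (a₀ + a₁ * l - c₀ * l ^ 2))
        (fun _ m => 1 / (4 * m * (c₃ * m ^ 3 + c₂ * m ^ 2 + c₁ * m + c₀)))
        p.1 p.2
      = -(3 * c₃ * p.2 ^ 2 + 2 * c₂ * p.2 + c₁)) ∧
    ((∃ κ₀ : ℝ, ∀ m : ℝ, -(3 * c₃ * m ^ 2 + 2 * c₂ * m + c₁) = κ₀) ↔
      (c₃ = 0 ∧ c₂ = 0)) ∧
    ((∀ m : ℝ, -(3 * c₃ * m ^ 2 + 2 * c₂ * m + c₁) = 0) ↔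
      (c₃ = 0 ∧ c₂ = 0 ∧ c₁ = 0)) := by
  have hκ : ∀ m : ℝ,
      -(3 * c₃ * m ^ 2 + 2 * c₂ * m + c₁) = -(3 * c₃) * m ^ 2 + -(2 * c₂) * m + -c₁ :=
    fun m => by ring
  refine ⟨fun p hp => ?_, ?_, ?_⟩
  · obtain ⟨hm, hq, hP⟩ := hpos p hp
    exact gaussCurv_eq_neg_deriv hm.ne' (mul_pos hq hP) (hasDerivAt_cubic c₀ c₁ c₂ c₃ p.2)
  · simp only [hκ, exists_forall_quadratic_eq_iff, neg_eq_zero, mul_eq_zero, three_ne_zero,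
      two_ne_zero, false_or]
  · simp only [hκ, forall_quadratic_eq_zero_iff, neg_eq_zero, mul_eq_zero, three_ne_zero,
      two_ne_zero, false_or]

/-- the metric `ds² = μ dλ²/(a₀+a₁λ-c₀λ²) + dμ²/(4μ(c₃μ³+c₂μ²+c₁μ+c₀))`
has Gaussian curvature `κ = -(3c₃μ² + 2c₂μ + c₁)`; `κ` is constant iff `c₃ = c₂ = 0`
and `κ = 0` iff `c₃ = c₂ = c₁ = 0`. -/
theorem gauss_curvature_of_second_type_metric
    (a₀ a₁ c₀ c₁ c₂ c₃ : ℝ) (U : Set (ℝ × ℝ)) (hU : IsOpen U)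
    (hpos : ∀ p ∈ U, 0 < p.2 ∧ 0 < a₀ + a₁ * p.1 - c₀ * p.1 ^ 2 ∧
      0 < c₃ * p.2 ^ 3 + c₂ * p.2 ^ 2 + c₁ * p.2 + c₀) :
    (∀ p ∈ U, gaussCurv
        (fun l m => m / (a₀ + a₁ * l - c₀ * l ^ 2))
        (fun _ m => 1 / (4 * m * (c₃ * m ^ 3 + c₂ * m ^ 2 + c₁ * m + c₀)))
        p.1 p.2
      = -(3 * c₃ * p.2 ^ 2 + 2 * c₂ * p.2 + c₁)) ∧
    ((∃ κ₀ : ℝ, ∀ m : ℝ, -(3 * c₃ * m ^ 2 + 2 * c₂ * m + c₁) = κ₀) ↔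
      (c₃ = 0 ∧ c₂ = 0)) ∧
    ((∀ m : ℝ, -(3 * c₃ * m ^ 2 + 2 * c₂ * m + c₁) = 0) ↔
      (c₃ = 0 ∧ c₂ = 0 ∧ c₁ = 0)) :=
  gauss_curvature_of_second_type_metric_general a₀ a₁ c₀ c₁ c₂ c₃ U hpos
end

section
/- Let G(μ) = c₃μ³ + c₂μ² + c₁μ + c₀ have three distinct nonzero roots μ₁, μ₂, μ₃ with c₃ ≠ 0. Then for arbitrary constants K₁, K₂, K₃, the function v(μ) = b/c₃ + K₁√(μ−μ₁) + K₂√(μ−μ₂) + K₃√(μ−μ₃) satisfies the linear ODE 8G(μ)v''' + 12G'(μ)v'' + 6(3c₃μ + c₂)v' − 3c₃ v = −3b (i.e., the case a₁ = 0 of equation (e2r)), for μ in a region where all three square roots are defined. -/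
/-!
The left-hand side `L` of the equation is linear and sends the constant `b / c₃` to `-3b`.
For `t = μ - a > 0` the derivatives of `√t` are `√t / (2t)`, `-√t / (4t²)`, `3√t / (8t³)`, so
`L[√(· - a)](μ) = 3 (G - G' t + (G''/2) t² - (G'''/6) t³) √t / t³`, and the bracket is Taylor's
expansion of `G(a) = G(μ - t)`. Hence each `√(μ - μᵢ)` solves the homogeneous equation.
-/

open Real

/-- The left-hand side of (e2r) with `a₁ = 0`, for `G(μ) = c₃μ³ + c₂μ² + c₁μ + c₀`. -/
noncomputable def e2rOp (c₀ c₁ c₂ c₃ : ℝ) (f : ℝ → ℝ) (μ : ℝ) : ℝ :=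
  8 * (c₃ * μ ^ 3 + c₂ * μ ^ 2 + c₁ * μ + c₀) * iteratedDeriv 3 f μ
    + 12 * (3 * c₃ * μ ^ 2 + 2 * c₂ * μ + c₁) * iteratedDeriv 2 f μ
    + 6 * (3 * c₃ * μ + c₂) * iteratedDeriv 1 f μ - 3 * c₃ * f μ

section e2rOp

variable {c₀ c₁ c₂ c₃ : ℝ}

theorem e2rOp_add {f g : ℝ → ℝ} {μ : ℝ} (hf : ContDiffAt ℝ 3 f μ) (hg : ContDiffAt ℝ 3 g μ) :
    e2rOp c₀ c₁ c₂ c₃ (f + g) μ = e2rOp c₀ c₁ c₂ c₃ f μ + e2rOp c₀ c₁ c₂ c₃ g μ := by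
  have hadd (n : ℕ) (hn : n ≤ 3) :
      iteratedDeriv n (f + g) μ = iteratedDeriv n f μ + iteratedDeriv n g μ :=
    iteratedDeriv_add (hf.of_le (by exact_mod_cast hn)) (hg.of_le (by exact_mod_cast hn))
  simp only [e2rOp, hadd 3 le_rfl, hadd 2 (by norm_num), hadd 1 (by norm_num), Pi.add_apply]
  ring

theorem e2rOp_const_mul (K : ℝ) (f : ℝ → ℝ) (μ : ℝ) :
    e2rOp c₀ c₁ c₂ c₃ (fun x => K * f x) μ = K * e2rOp c₀ c₁ c₂ c₃ f μ := by
  simp only [e2rOp, ← smul_eq_mul, iteratedDeriv_fun_const_smul_field]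
  simp only [smul_eq_mul]
  ring

theorem e2rOp_const (b μ : ℝ) : e2rOp c₀ c₁ c₂ c₃ (fun _ => b) μ = -3 * c₃ * b := by
  simp [e2rOp, iteratedDeriv_const]

end e2rOp

theorem iteratedDeriv_sqrt_sub (n : ℕ) (a x : ℝ) :
    iteratedDeriv n (fun x => √(x - a)) x
      = (descPochhammer ℝ n).eval (1 / 2) * (x - a) ^ ((1 / 2 : ℝ) - n) := by
  simp_rw [sqrt_eq_rpow]
  rw [iteratedDeriv_comp_sub_const (f := fun y => y ^ (1 / 2 : ℝ)), iteratedDeriv_eq_iterate]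
  exact iter_deriv_rpow_const _ _ n

theorem rpow_half_sub_natCast {t : ℝ} (ht : 0 < t) (n : ℕ) :
    t ^ ((1 / 2 : ℝ) - n) = √t / t ^ n := by
  rw [rpow_sub ht, rpow_natCast, sqrt_eq_rpow]

theorem e2rOp_sqrt_sub {a μ : ℝ} (ha : a < μ) (c₀ c₁ c₂ c₃ : ℝ) :
    e2rOp c₀ c₁ c₂ c₃ (fun x => √(x - a)) μ
      = 3 * (c₃ * a ^ 3 + c₂ * a ^ 2 + c₁ * a + c₀) * √(μ - a) / (μ - a) ^ 3 := by
  have ht : 0 < μ - a := sub_pos.2 ha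
  simp only [e2rOp, iteratedDeriv_sqrt_sub, rpow_half_sub_natCast ht]
  norm_num [descPochhammer_succ_right]
  field_simp
  ring

theorem contDiffAt_sqrt_sub {a x : ℝ} (ha : a < x) (n : WithTop ℕ∞) :
    ContDiffAt ℝ n (fun x => √(x - a)) x :=
  (contDiffAt_id.sub contDiffAt_const).sqrt (sub_pos.2 ha).ne'

theorem table1_case3_solution_general
    (b c₀ c₁ c₂ c₃ K₁ K₂ K₃ μ₁ μ₂ μ₃ : ℝ)
    (hc₃ : c₃ ≠ 0)
    (hroots : ∀ x : ℝ, c₃ * x ^ 3 + c₂ * x ^ 2 + c₁ * x + c₀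
      = c₃ * (x - μ₁) * (x - μ₂) * (x - μ₃))
    (v : ℝ → ℝ)
    (hv : ∀ μ : ℝ, v μ = b / c₃ + K₁ * Real.sqrt (μ - μ₁)
      + K₂ * Real.sqrt (μ - μ₂) + K₃ * Real.sqrt (μ - μ₃)) :
    ∀ μ : ℝ, μ₁ < μ → μ₂ < μ → μ₃ < μ →
      8 * (c₃ * μ ^ 3 + c₂ * μ ^ 2 + c₁ * μ + c₀) * deriv (deriv (deriv v)) μ
        + 12 * (3 * c₃ * μ ^ 2 + 2 * c₂ * μ + c₁) * deriv (deriv v) μ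
        + 6 * (3 * c₃ * μ + c₂) * deriv v μ
        - 3 * c₃ * v μ = -3 * b := by
  intro μ h₁ h₂ h₃
  have hv' : v = (fun _ => b / c₃) + (fun x => K₁ * √(x - μ₁)) + (fun x => K₂ * √(x - μ₂))
      + (fun x => K₃ * √(x - μ₃)) := funext hv
  have hG₁ := hroots μ₁
  have hG₂ := hroots μ₂
  have hG₃ := hroots μ₃
  simp only [sub_self, mul_zero, zero_mul] at hG₁ hG₂ hG₃
  have hsmooth {a : ℝ} (ha : a < μ) (K : ℝ) : ContDiffAt ℝ 3 (fun x => K * √(x - a)) μ :=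
    contDiffAt_const.mul (contDiffAt_sqrt_sub ha 3)
  have h₀₁ : ContDiffAt ℝ 3 ((fun _ => b / c₃) + fun x => K₁ * √(x - μ₁)) μ :=
    contDiffAt_const.add (hsmooth h₁ K₁)
  have h₀₁₂ : ContDiffAt ℝ 3 (((fun _ => b / c₃) + fun x => K₁ * √(x - μ₁))
      + fun x => K₂ * √(x - μ₂)) μ :=
    h₀₁.add (hsmooth h₂ K₂)
  have hL : e2rOp c₀ c₁ c₂ c₃ v μ = -3 * b := by
    rw [hv', e2rOp_add h₀₁₂ (hsmooth h₃ K₃), e2rOp_add h₀₁ (hsmooth h₂ K₂),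
      e2rOp_add contDiffAt_const (hsmooth h₁ K₁), e2rOp_const, e2rOp_const_mul,
      e2rOp_const_mul, e2rOp_const_mul, e2rOp_sqrt_sub h₁, e2rOp_sqrt_sub h₂,
      e2rOp_sqrt_sub h₃, hG₁, hG₂, hG₃]
    field_simp
    ring
  rw [← hL]
  simp only [e2rOp, iteratedDeriv_eq_iterate]
  rfl

/-- if `G(μ) = c₃μ³+c₂μ²+c₁μ+c₀` has three distinct nonzero roots
`μ₁, μ₂, μ₃` (with `c₃ ≠ 0`), then `v(μ) = b/c₃ + K₁√(μ-μ₁) + K₂√(μ-μ₂) + K₃√(μ-μ₃)`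
satisfies `8G v''' + 12G' v'' + 6(3c₃μ+c₂)v' - 3c₃ v = -3b` for `μ` above all roots. -/
theorem table1_case3_solution
    (b c₀ c₁ c₂ c₃ K₁ K₂ K₃ μ₁ μ₂ μ₃ : ℝ)
    (hc₃ : c₃ ≠ 0)
    (h12 : μ₁ ≠ μ₂) (h23 : μ₂ ≠ μ₃) (h13 : μ₁ ≠ μ₃)
    (h1 : μ₁ ≠ 0) (h2 : μ₂ ≠ 0) (h3 : μ₃ ≠ 0)
    (hroots : ∀ x : ℝ, c₃ * x ^ 3 + c₂ * x ^ 2 + c₁ * x + c₀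
      = c₃ * (x - μ₁) * (x - μ₂) * (x - μ₃))
    (v : ℝ → ℝ)
    (hv : ∀ μ : ℝ, v μ = b / c₃ + K₁ * Real.sqrt (μ - μ₁)
      + K₂ * Real.sqrt (μ - μ₂) + K₃ * Real.sqrt (μ - μ₃)) :
    ∀ μ : ℝ, μ₁ < μ → μ₂ < μ → μ₃ < μ →
      8 * (c₃ * μ ^ 3 + c₂ * μ ^ 2 + c₁ * μ + c₀) * deriv (deriv (deriv v)) μ
        + 12 * (3 * c₃ * μ ^ 2 + 2 * c₂ * μ + c₁) * deriv (deriv v) μ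
        + 6 * (3 * c₃ * μ + c₂) * deriv v μ
        - 3 * c₃ * v μ = -3 * b :=
  table1_case3_solution_general b c₀ c₁ c₂ c₃ K₁ K₂ K₃ μ₁ μ₂ μ₃ hc₃ hroots v hv
end

section
/- Consider the planar system ẍ + Ωẏ = −V_x, ÿ − Ωẋ = −V_y with V = Ax + By − a(x²+y²)[C + bx + ½a(5x²+y²)] and Ω = 6ax + b. Then I = a[2(xẏ − yẋ) − (4ax+b)(x²+y²)]·[ẏ − C − bx − a(3x²+y²)] + A[ẏ − bx − a(3x²+y²)] − B[ẋ + y(b+2ax)] is a first integral: dI/dt = 0 along all solutions. -/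
/-!
Differentiating `I` along a trajectory and eliminating `ẍ`, `ÿ` by the equations of motion
leaves a polynomial in `x, y, ẋ, ẏ` which vanishes identically.
-/

namespace Case37

variable (a b A B C : ℝ)

noncomputable def potential (u v : ℝ) : ℝ :=
  A * u + B * v - a * (u ^ 2 + v ^ 2) * (C + b * u + (1 / 2) * a * (5 * u ^ 2 + v ^ 2))

/-- `I` on phase space, with `p`, `q` in place of `ẋ`, `ẏ`. -/
def firstIntegral (x y p q : ℝ) : ℝ :=
  a * (2 * (x * q - y * p) - (4 * a * x + b) * (x ^ 2 + y ^ 2))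
      * (q - C - b * x - a * (3 * x ^ 2 + y ^ 2))
    + A * (q - b * x - a * (3 * x ^ 2 + y ^ 2))
    - B * (p + y * (b + 2 * a * x))

theorem hasDerivAt_potential_fst (u v : ℝ) :
    HasDerivAt (fun u => potential a b A B C u v)
      (A - 2 * a * u * (C + b * u + (1 / 2) * a * (5 * u ^ 2 + v ^ 2))
        - a * (u ^ 2 + v ^ 2) * (b + 5 * a * u)) u := by
  have hu := hasDerivAt_id' u
  have hu2 := hasDerivAt_pow 2 u
  refine (((hu.const_mul A).add_const (B * v)).sub
    (((hu2.add_const (v ^ 2)).const_mul a).mul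
      (((hu.const_mul b).const_add C).add
        (((hu2.const_mul 5).add_const (v ^ 2)).const_mul ((1 / 2) * a))))).congr_deriv ?_
  simp only [Pi.add_apply]
  ring

theorem hasDerivAt_potential_snd (u v : ℝ) :
    HasDerivAt (fun v => potential a b A B C u v)
      (B - 2 * a * v * (C + b * u + (1 / 2) * a * (5 * u ^ 2 + v ^ 2))
        - a ^ 2 * v * (u ^ 2 + v ^ 2)) v := by
  have hv := hasDerivAt_id' v
  have hv2 := hasDerivAt_pow 2 v
  refine (((hv.const_mul B).const_add (A * u)).sub
    (((hv2.const_add (u ^ 2)).const_mul a).mul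
      (((hv2.const_add (5 * u ^ 2)).const_mul ((1 / 2) * a)).const_add (C + b * u)))).congr_deriv ?_
  ring

variable {a b A B C}

theorem hasDerivAt_firstIntegral_zero {t : ℝ} {x y p q : ℝ → ℝ}
    (hx : HasDerivAt x (p t) t) (hy : HasDerivAt y (q t) t)
    (hp : HasDerivAt p
      (-deriv (fun u => potential a b A B C u (y t)) (x t) - (6 * a * x t + b) * q t) t)
    (hq : HasDerivAt q
      (-deriv (fun v => potential a b A B C (x t) v) (y t) + (6 * a * x t + b) * p t) t) :
    HasDerivAt (fun s => firstIntegral a b A B C (x s) (y s) (p s) (q s)) 0 t := by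
  rw [(hasDerivAt_potential_fst ..).deriv] at hp
  rw [(hasDerivAt_potential_snd ..).deriv] at hq
  have hP := (((hx.mul hq).sub (hy.mul hp)).const_mul 2).sub
    (((hx.const_mul (4 * a)).add_const b).mul ((hx.pow 2).add (hy.pow 2)))
  have hQ := ((hq.sub_const C).sub (hx.const_mul b)).sub
    ((((hx.pow 2).const_mul 3).add (hy.pow 2)).const_mul a)
  have hR := (hq.sub (hx.const_mul b)).sub
    ((((hx.pow 2).const_mul 3).add (hy.pow 2)).const_mul a)
  have hS := hp.add (hy.mul ((hx.const_mul (2 * a)).const_add b))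
  refine ((((hP.const_mul a).mul hQ).add (hR.const_mul A)).sub (hS.const_mul B)).congr_deriv ?_
  simp only [Pi.add_apply, Pi.sub_apply, Pi.mul_apply, Pi.pow_apply]
  ring

end Case37

/-- case 37, Euclidean plane: for the system `ẍ + Ωẏ = -V_x`,
`ÿ - Ωẋ = -V_y` with `V = Ax + By - a(x²+y²)[C + bx + ½a(5x²+y²)]` and
`Ω = 6ax + b`, the stated cubic expression `I` is a first integral. -/
theorem case37_first_integral
    (a b A B C : ℝ) (x y : ℝ → ℝ)
    (hx : ContDiff ℝ 2 x) (hy : ContDiff ℝ 2 y)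
    (heq1 : ∀ t, deriv (deriv x) t + (6 * a * x t + b) * deriv y t
      = - deriv (fun u => A * u + B * y t
          - a * (u ^ 2 + (y t) ^ 2) * (C + b * u + (1 / 2) * a * (5 * u ^ 2 + (y t) ^ 2)))
        (x t))
    (heq2 : ∀ t, deriv (deriv y) t - (6 * a * x t + b) * deriv x t
      = - deriv (fun v => A * x t + B * v
          - a * ((x t) ^ 2 + v ^ 2) * (C + b * x t + (1 / 2) * a * (5 * (x t) ^ 2 + v ^ 2)))
        (y t)) :
    ∀ t, deriv (fun s =>
      a * (2 * (x s * deriv y s - y s * deriv x s)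
            - (4 * a * x s + b) * ((x s) ^ 2 + (y s) ^ 2))
          * (deriv y s - C - b * x s - a * (3 * (x s) ^ 2 + (y s) ^ 2))
        + A * (deriv y s - b * x s - a * (3 * (x s) ^ 2 + (y s) ^ 2))
        - B * (deriv x s + y s * (b + 2 * a * x s))) t = 0 := by
  intro t
  have hdx := hx.differentiable two_ne_zero
  have hdy := hy.differentiable two_ne_zero
  have hddx := (hx.iterate_deriv' 1 1).differentiable one_ne_zero
  have hddy := (hy.iterate_deriv' 1 1).differentiable one_ne_zero
  exact (Case37.hasDerivAt_firstIntegral_zero (hdx t).hasDerivAt (hdy t).hasDerivAt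
    ((hddx t).hasDerivAt.congr_deriv (eq_sub_of_add_eq (heq1 t)))
    ((hddy t).hasDerivAt.congr_deriv (eq_add_of_sub_eq (heq2 t)))).deriv
end
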